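/- Let A be a nilpotent left Leibniz algebra and U ≠ A a subalgebra. Then the normaliser N_A(U) = {a ∈ A | au ∈ U and ua ∈ U for all u ∈ U} strictly contains U. -/
import Mathlib


/-- Lower central series of the subalgebra `U`: `U¹ = U`, `U^{k+1} = U·Uᵏ`. -/
def lcsIn {F A : Type*} [Field F] [AddCommGroup A] [Module F A]
    (mul : A →ₗ[F] A →ₗ[F] A) (U : Submodule F A) : ℕ → Submodule F A
  | 0 => U
  | k + 1 => Submodule.span F {x : A | ∃ a ∈ U, ∃ b ∈ lcsIn mul U k, x = mul a b}

/-- in a nilpotent left Leibniz algebra, a proper subalgebra is properly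
contained in its normaliser. -/
theorem normaliser_lt_of_nilpotent {F A : Type*} [Field F] [AddCommGroup A] [Module F A]
    (mul : A →ₗ[F] A →ₗ[F] A)
    (leibniz : ∀ a b c : A, mul a (mul b c) = mul (mul a b) c + mul b (mul a c))
    (hnilp : ∃ k, lcsIn mul (⊤ : Submodule F A) k = ⊥)
    (U : Submodule F A) (hU : ∀ u ∈ U, ∀ v ∈ U, mul u v ∈ U) (hne : U ≠ ⊤) :
    ∃ a : A, a ∉ U ∧ ∀ u ∈ U, mul a u ∈ U ∧ mul u a ∈ U := by
  classical
  set T : ℕ → Submodule F A := lcsIn mul ⊤ with hT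
  -- basic multiplication fact
  have hmul : ∀ n, ∀ a : A, ∀ b ∈ T n, mul a b ∈ T (n + 1) := by
    intro n a b hb
    exact Submodule.subset_span ⟨a, trivial, b, hb, rfl⟩
  -- Leibniz rearranged
  have hleib : ∀ a b c : A, mul (mul a b) c = mul a (mul b c) - mul b (mul a c) := by
    intro a b c
    rw [leibniz a b c]; abel
  -- key lemma: T (m+1) · T l ⊆ T (m+l+2)
  have hsucc : ∀ n, T (n + 1) =
      Submodule.span F {x : A | ∃ a ∈ (⊤ : Submodule F A), ∃ b ∈ T n, x = mul a b} :=
    fun n => rfl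
  have hD : ∀ m l, ∀ x ∈ T (m + 1), ∀ y ∈ T l, mul x y ∈ T (m + l + 2) := by
    intro m
    induction m with
    | zero =>
      intro l x hx
      rw [hsucc 0] at hx
      refine Submodule.span_induction
        (p := fun x _ => ∀ y ∈ T l, mul x y ∈ T (0 + l + 2)) ?_ ?_ ?_ ?_ hx
      · rintro x ⟨a, -, b, hb, rfl⟩ y hy
        rw [hleib a b y]
        have h1 : mul b y ∈ T (l + 1) := hmul l b y hy
        have h2 : mul a y ∈ T (l + 1) := hmul l a y hy
        rw [show 0 + l + 2 = l + 1 + 1 from by omega]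
        exact Submodule.sub_mem _ (hmul (l + 1) a _ h1) (hmul (l + 1) b _ h2)
      · intro y hy; simp
      · intro x z hx hz h1 h2 y hy
        rw [map_add, LinearMap.add_apply]
        exact Submodule.add_mem _ (h1 y hy) (h2 y hy)
      · intro c x hx h1 y hy
        rw [map_smul, LinearMap.smul_apply]
        exact Submodule.smul_mem _ _ (h1 y hy)
    | succ m ih =>
      intro l x hx
      rw [hsucc (m + 1)] at hx
      refine Submodule.span_induction
        (p := fun x _ => ∀ y ∈ T l, mul x y ∈ T (m + 1 + l + 2)) ?_ ?_ ?_ ?_ hx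
      · rintro x ⟨a, -, b, hb, rfl⟩ y hy
        rw [hleib a b y]
        have h1 : mul b y ∈ T (m + l + 2) := ih l b hb y hy
        have h2 : mul a y ∈ T (l + 1) := hmul l a y hy
        have h3 : mul a (mul b y) ∈ T (m + l + 3) := hmul (m + l + 2) a _ h1
        have h4 : mul b (mul a y) ∈ T (m + (l + 1) + 2) := ih (l + 1) b hb _ h2
        have h5 : mul b (mul a y) ∈ T (m + l + 3) := by
          have : m + (l + 1) + 2 = m + l + 3 := by omega
          rwa [this] at h4
        have : m + 1 + l + 2 = m + l + 3 := by omega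
        rw [this]
        exact Submodule.sub_mem _ h3 h5
      · intro y hy; simp
      · intro x z hx hz h1 h2 y hy
        rw [map_add, LinearMap.add_apply]
        exact Submodule.add_mem _ (h1 y hy) (h2 y hy)
      · intro c x hx h1 y hy
        rw [map_smul, LinearMap.smul_apply]
        exact Submodule.smul_mem _ _ (h1 y hy)
  -- find minimal k with T k ≤ U
  obtain ⟨K, hK⟩ := hnilp
  have hex : ∃ k, T k ≤ U := ⟨K, le_of_eq_of_le hK bot_le⟩
  let k := Nat.find hex
  have hkle : T k ≤ U := Nat.find_spec hex
  have hk0 : k ≠ 0 := by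
    intro h
    apply hne
    have : T 0 ≤ U := h ▸ hkle
    exact top_le_iff.mp this
  obtain ⟨m, hm⟩ : ∃ m, k = m + 1 := ⟨k - 1, by omega⟩
  have hnotle : ¬ T m ≤ U := Nat.find_min hex (by omega)
  obtain ⟨a, ha, haU⟩ := SetLike.not_le_iff_exists.mp hnotle
  refine ⟨a, haU, ?_⟩
  intro u hu
  constructor
  · -- mul a u ∈ U
    cases m with
    | zero =>
      have : mul a u ∈ T 1 := hmul 0 a u trivial
      exact hkle (by rwa [hm])
    | succ m' =>
      have : mul a u ∈ T (m' + 0 + 2) := hD m' 0 a ha u trivial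
      have h2 : mul a u ∈ T k := by
        have : m' + 0 + 2 = k := by omega
        rwa [this] at ‹mul a u ∈ T (m' + 0 + 2)›
      exact hkle h2
  · -- mul u a ∈ U
    have : mul u a ∈ T (m + 1) := hmul m u a ha
    exact hkle (by rwa [← hm] at this)
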